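/- Let {(Xᵢ,Yᵢ)}_{i=1}^n be i.i.d. with joint pmf p_{XY} on a product of finite alphabets 𝒳 × 𝒴, let ε, ε', b₁ > 0, and suppose ℙ[ f(Yⁿ) > ε' or f(Xⁿ,Yⁿ) > ε' ] ≤ 2^{−n b₁ ε}. Then ℙ[ (Xⁿ,Yⁿ) ∉ 𝒜_{ε,ε'}^{(n)}(X,Y) ] ≤ e^{n C_X^{(1)}(ε)} + e^{n C_X^{(2)}(ε)} + 2^{−n b₁ ε}. -/

import Mathlib

open Finset Real
open scoped Classical BigOperators

/-- Shannon entropy (in bits) of a pmf on a finite alphabet, with the convention `0 log 0 = 0`. -/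
noncomputable def shannonEntropy {W : Type*} [Fintype W] (q : W → ℝ) : ℝ :=
  - ∑ w, q w * Real.logb 2 (q w)

/-- Probability of an i.i.d. sequence: `p(wⁿ) = ∏ᵢ p(wᵢ)`. -/
noncomputable def seqProb {W : Type*} (q : W → ℝ) {n : ℕ} (w : Fin n → W) : ℝ :=
  ∏ i, q (w i)

/-- The deviation `f(wⁿ) = |−(1/n) log₂ p(wⁿ) − H(W)|` of the empirical entropy. -/
noncomputable def fdev {W : Type*} [Fintype W] (q : W → ℝ) {n : ℕ} (w : Fin n → W) : ℝ :=
  |(-(1 / (n : ℝ))) * Real.logb 2 (seqProb q w) - shannonEntropy q|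

/-- Chernoff exponent `C_W^{(1)}(ε) = inf_{s>0} ( ln 𝔼[q(W)^{−s/ln 2}] − s(H(W)+ε) )`. -/
noncomputable def chernoff1 {W : Type*} [Fintype W] (q : W → ℝ) (ε : ℝ) : ℝ :=
  sInf ((fun s : ℝ =>
    Real.log (∑ w ∈ Finset.univ.filter (fun w => 0 < q w), q w ^ (1 - s / Real.log 2))
      - s * (shannonEntropy q + ε)) '' Set.Ioi 0)

/-- Chernoff exponent `C_W^{(2)}(ε) = inf_{s>0} ( ln 𝔼[q(W)^{s/ln 2}] − s(−H(W)+ε) )`. -/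
noncomputable def chernoff2 {W : Type*} [Fintype W] (q : W → ℝ) (ε : ℝ) : ℝ :=
  sInf ((fun s : ℝ =>
    Real.log (∑ w ∈ Finset.univ.filter (fun w => 0 < q w), q w ^ (1 + s / Real.log 2))
      - s * (-shannonEntropy q + ε)) '' Set.Ioi 0)

/-- Marginal on the first component of a joint pmf. -/
noncomputable def margFst {X Y : Type*} [Fintype Y] (p : X × Y → ℝ) (x : X) : ℝ :=
  ∑ y, p (x, y)

/-- Marginal on the second component of a joint pmf. -/
noncomputable def margSnd {X Y : Type*} [Fintype X] (p : X × Y → ℝ) (y : Y) : ℝ :=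
  ∑ x, p (x, y)

/-- The sequence of pairs associated to a pair of sequences. -/
def pairSeq {X Y : Type*} {n : ℕ} (w : (Fin n → X) × (Fin n → Y)) : Fin n → X × Y :=
  fun i => (w.1 i, w.2 i)

/-- Joint probability `p(xⁿ,yⁿ) = ∏ᵢ p(xᵢ,yᵢ)` of a pair of i.i.d. sequences. -/
noncomputable def jointSeqProb {X Y : Type*} (p : X × Y → ℝ) {n : ℕ}
    (w : (Fin n → X) × (Fin n → Y)) : ℝ :=
  ∏ i, p (w.1 i, w.2 i)

/-- The typical set `𝒜_{ε,ε'}^{(n)}(X,Y)`: `f(xⁿ) ≤ ε`, `f(yⁿ) ≤ ε'`, `f(xⁿ,yⁿ) ≤ ε'`. -/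
def typical {X Y : Type*} [Fintype X] [Fintype Y] (p : X × Y → ℝ)
    (ε ε' : ℝ) {n : ℕ} (w : (Fin n → X) × (Fin n → Y)) : Prop :=
  fdev (margFst p) w.1 ≤ ε ∧ fdev (margSnd p) w.2 ≤ ε' ∧ fdev p (pairSeq w) ≤ ε'

/-- Conditional probability `ℙ[ (Xⁿ,Yⁿ) ∉ 𝒜_{ε,ε'}^{(n)}(X,Y) | Xⁿ = xⁿ ]`
(for `xⁿ` with `p(xⁿ) > 0`). -/
noncomputable def condNotTyp {X Y : Type*} [Fintype X] [Fintype Y] (p : X × Y → ℝ)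
    (ε ε' : ℝ) {n : ℕ} (xn : Fin n → X) : ℝ :=
  (∑ yn ∈ Finset.univ.filter (fun yn : Fin n → Y => ¬ typical p ε ε' (xn, yn)),
      jointSeqProb p (xn, yn)) / seqProb (margFst p) xn

/-
Outside the typical set either f(xⁿ) > ε or the event of the hypothesis occurs, and the first
event only involves the X-marginal. Since −log₂ p(Xⁿ) is a sum of n i.i.d. terms, Markov's
inequality applied to p(Xⁿ)^{∓s/ln 2} bounds each of the two tails of f(Xⁿ) by
e^{n(ln 𝔼[p(X)^{∓s/ln 2}] − s(±H(X)+ε))} for every s > 0; taking the infimum over s gives the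
Chernoff exponents.
-/

namespace Finset

lemma sum_filter_or_le {α : Type*} (s : Finset α) (P Q : α → Prop) [DecidablePred P]
    [DecidablePred Q] {f : α → ℝ} (hf : ∀ a ∈ s, 0 ≤ f a) :
    ∑ a ∈ s.filter (fun a => P a ∨ Q a), f a
      ≤ ∑ a ∈ s.filter P, f a + ∑ a ∈ s.filter Q, f a := by
  classical
  rw [filter_or, ← sum_union_inter]
  exact le_add_of_nonneg_right <|
    sum_nonneg fun a ha => hf a (mem_of_mem_filter a (mem_of_mem_inter_left ha))

end Finset

section Chernoff

variable {W : Type*} {q : W → ℝ}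

lemma seqProb_nonneg (hq : ∀ x, 0 ≤ q x) {n : ℕ} (w : Fin n → W) : 0 ≤ seqProb q w :=
  prod_nonneg fun i _ => hq (w i)

/-- The junk value `1 / 0 = 0` is harmless here: for `n = 0` the sequence has probability `1`. -/
lemma natCast_mul_neg_one_div_mul_logb_seqProb (n : ℕ) (w : Fin n → W) :
    (n : ℝ) * ((-(1 / (n : ℝ))) * Real.logb 2 (seqProb q w)) = -Real.logb 2 (seqProb q w) := by
  rcases n.eq_zero_or_pos with rfl | hn
  · simp [seqProb]
  · field_simp

lemma sum_piFinset_support_seqProb_rpow [Fintype W] (hq : ∀ x, 0 ≤ q x) (n : ℕ) (t : ℝ) :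
    ∑ w ∈ Fintype.piFinset (fun _ : Fin n => univ.filter (fun x => 0 < q x)), seqProb q w ^ t
      = (∑ x ∈ univ.filter (fun x => 0 < q x), q x ^ t) ^ n := by
  rw [← Fin.prod_const, prod_univ_sum]
  refine sum_congr rfl fun w _ => ?_
  rw [seqProb, Real.finsetProd_rpow _ _ fun i _ => hq (w i)]

lemma mul_sum_seqProb_le [Fintype W] (hq : ∀ x, 0 ≤ q x) {n : ℕ} (T : Finset (Fin n → W))
    {c t : ℝ} (hT : ∀ w ∈ T, 0 < seqProb q w → c * seqProb q w ≤ seqProb q w ^ t) :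
    c * ∑ w ∈ T, seqProb q w ≤ (∑ x ∈ univ.filter (fun x => 0 < q x), q x ^ t) ^ n := by
  have hsupp : T.filter (fun w => seqProb q w ≠ 0)
      ⊆ Fintype.piFinset (fun _ : Fin n => univ.filter (fun x => 0 < q x)) := by
    intro w hw
    rw [Fintype.mem_piFinset]
    intro i
    have hi : q (w i) ≠ 0 := fun h0 => (mem_filter.1 hw).2 (prod_eq_zero (mem_univ i) h0)
    exact mem_filter.2 ⟨mem_univ _, (hq _).lt_of_ne' hi⟩
  rw [← sum_filter_ne_zero, mul_sum, ← sum_piFinset_support_seqProb_rpow hq]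
  calc ∑ w ∈ T.filter (fun w => seqProb q w ≠ 0), c * seqProb q w
      ≤ ∑ w ∈ T.filter (fun w => seqProb q w ≠ 0), seqProb q w ^ t :=
        sum_le_sum fun w hw =>
          hT w (mem_filter.1 hw).1 ((seqProb_nonneg hq w).lt_of_ne' (mem_filter.1 hw).2)
    _ ≤ _ := sum_le_sum_of_subset_of_nonneg hsupp fun w _ _ =>
        Real.rpow_nonneg (seqProb_nonneg hq w) t

lemma pow_le_exp_mul_log {S : ℝ} (hS : 0 ≤ S) (n : ℕ) :
    S ^ n ≤ Real.exp (n * Real.log S) := by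
  rcases hS.lt_or_eq with hS | rfl
  · rw [← Real.log_pow, Real.exp_log (pow_pos hS n)]
  · rcases n.eq_zero_or_pos with rfl | hn
    · simp
    · rw [zero_pow hn.ne']
      exact (Real.exp_pos _).le

lemma sum_seqProb_le_exp_chernoff [Fintype W] (hq : ∀ x, 0 ≤ q x) {n : ℕ}
    (T : Finset (Fin n → W)) {r b : ℝ}
    (hT : ∀ w ∈ T, 0 < seqProb q w → n * b ≤ r * -Real.logb 2 (seqProb q w)) :
    ∑ w ∈ T, seqProb q w
      ≤ Real.exp (n * (Real.log (∑ x ∈ univ.filter (fun x => 0 < q x),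
          q x ^ (1 - r / Real.log 2)) - b)) := by
  set S := ∑ x ∈ univ.filter (fun x => 0 < q x), q x ^ (1 - r / Real.log 2)
  have hS : 0 ≤ S := sum_nonneg fun x _ => Real.rpow_nonneg (hq x) _
  have hmarkov : Real.exp (n * b) * ∑ w ∈ T, seqProb q w ≤ S ^ n := by
    refine mul_sum_seqProb_le hq T fun w hw hP => ?_
    have hlog2 : Real.log 2 ≠ 0 := (Real.log_pos one_lt_two).ne'
    rw [Real.rpow_def_of_pos hP, mul_comm]
    calc seqProb q w * Real.exp (n * b)
        ≤ Real.exp (Real.log (seqProb q w)) * Real.exp (r * -Real.logb 2 (seqProb q w)) := by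
          rw [Real.exp_log hP]
          exact mul_le_mul_of_nonneg_left (Real.exp_le_exp.2 (hT w hw hP)) hP.le
      _ = Real.exp (Real.log (seqProb q w) * (1 - r / Real.log 2)) := by
          rw [← Real.exp_add, Real.logb]
          congr 1
          field_simp
          ring
  rw [mul_sub, Real.exp_sub, le_div_iff₀ (Real.exp_pos _), mul_comm]
  exact hmarkov.trans (pow_le_exp_mul_log hS n)

lemma le_exp_mul_sInf {A c : ℝ} (hc : 0 ≤ c) {g : ℝ → ℝ} {I : Set ℝ} (hI : I.Nonempty)
    (hA : ∀ s ∈ I, A ≤ Real.exp (c * g s)) : A ≤ Real.exp (c * sInf (g '' I)) := by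
  rcases hc.lt_or_eq with hc | rfl
  · rcases le_or_gt A 0 with hA0 | hA0
    · exact hA0.trans (Real.exp_pos _).le
    -- `log A / c` bounds `g '' I` below, so this `sInf` is not the junk value `0`.
    rw [← Real.log_le_iff_le_exp hA0, ← div_le_iff₀' hc]
    refine le_csInf (hI.image g) ?_
    rintro _ ⟨s, hs, rfl⟩
    rw [div_le_iff₀' hc, Real.log_le_iff_le_exp hA0]
    exact hA s hs
  · obtain ⟨s, hs⟩ := hI
    simpa using hA s hs

lemma sum_seqProb_fdev_gt_le [Fintype W] (hq : ∀ x, 0 ≤ q x) (n : ℕ) (ε : ℝ) :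
    ∑ w ∈ univ.filter (fun w : Fin n → W => ε < fdev q w), seqProb q w
      ≤ Real.exp (n * chernoff1 q ε) + Real.exp (n * chernoff2 q ε) := by
  set Z : (Fin n → W) → ℝ := fun w => (-(1 / (n : ℝ))) * Real.logb 2 (seqProb q w)
  have hZ (w : Fin n → W) : (n : ℝ) * Z w = -Real.logb 2 (seqProb q w) :=
    natCast_mul_neg_one_div_mul_logb_seqProb n w
  have hn : (0 : ℝ) ≤ n := n.cast_nonneg
  simp only [fdev, lt_abs]
  refine (sum_filter_or_le _ _ _ fun w _ => seqProb_nonneg hq w).trans (add_le_add ?_ ?_)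
  · refine le_exp_mul_sInf hn Set.nonempty_Ioi fun s hs => ?_
    refine sum_seqProb_le_exp_chernoff hq _ fun w hw _ => ?_
    have hw : ε < Z w - shannonEntropy q := (mem_filter.1 hw).2
    rw [← hZ]
    have hscaled : (n : ℝ) * (shannonEntropy q + ε) ≤ n * Z w := by gcongr; linarith
    nlinarith [Set.mem_Ioi.1 hs, hscaled]
  · refine le_exp_mul_sInf hn Set.nonempty_Ioi fun s hs => ?_
    have hchernoff := sum_seqProb_le_exp_chernoff hq
      (univ.filter fun w => ε < -(Z w - shannonEntropy q)) (r := -s)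
      (b := s * (-shannonEntropy q + ε)) ?_
    · rwa [neg_div, sub_neg_eq_add] at hchernoff
    intro w hw _
    have hw : ε < -(Z w - shannonEntropy q) := (mem_filter.1 hw).2
    rw [← hZ]
    have hscaled : (n : ℝ) * Z w ≤ n * (shannonEntropy q - ε) := by gcongr; linarith
    nlinarith [Set.mem_Ioi.1 hs, hscaled]

end Chernoff

lemma sum_jointSeqProb_filter_fst {X Y : Type*} [Fintype X] [Fintype Y] (p : X × Y → ℝ)
    {n : ℕ} (R : (Fin n → X) → Prop) [DecidablePred R] :
    ∑ w ∈ univ.filter (fun w : (Fin n → X) × (Fin n → Y) => R w.1), jointSeqProb p w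
      = ∑ xn ∈ univ.filter R, seqProb (margFst p) xn := by
  rw [sum_filter, sum_filter, Fintype.sum_prod_type]
  refine sum_congr rfl fun xn _ => ?_
  split_ifs
  · simp only [seqProb, margFst, jointSeqProb]
    rw [prod_univ_sum, Fintype.piFinset_univ]
  · exact sum_const_zero

theorem prob_not_typical_bound_general
    {X Y : Type*} [Fintype X] [Fintype Y] (p : X × Y → ℝ)
    (hp : ∀ xy, 0 ≤ p xy)
    (n : ℕ) (ε ε' b₁ : ℝ)
    (hhyp : ∑ w ∈ Finset.univ.filter (fun w : (Fin n → X) × (Fin n → Y) =>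
          fdev (margSnd p) w.2 > ε' ∨ fdev p (pairSeq w) > ε'),
        jointSeqProb p w ≤ (2 : ℝ) ^ (-((n : ℝ) * b₁ * ε))) :
    ∑ w ∈ Finset.univ.filter (fun w : (Fin n → X) × (Fin n → Y) => ¬ typical p ε ε' w),
        jointSeqProb p w
      ≤ Real.exp ((n : ℝ) * chernoff1 (margFst p) ε)
        + Real.exp ((n : ℝ) * chernoff2 (margFst p) ε)
        + (2 : ℝ) ^ (-((n : ℝ) * b₁ * ε)) := by
  have hq : ∀ x, 0 ≤ margFst p x := fun x => sum_nonneg fun y _ => hp (x, y)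
  have hnot_typical (w : (Fin n → X) × (Fin n → Y)) : ¬ typical p ε ε' w ↔
      ε < fdev (margFst p) w.1 ∨ (fdev (margSnd p) w.2 > ε' ∨ fdev p (pairSeq w) > ε') := by
    simp only [typical, not_and_or, not_le, gt_iff_lt]
  rw [filter_congr fun w _ => hnot_typical w]
  have hjoint : ∀ w : (Fin n → X) × (Fin n → Y), 0 ≤ jointSeqProb p w :=
    fun w => prod_nonneg fun i _ => hp _
  refine (sum_filter_or_le _ _ _ fun w _ => hjoint w).trans ?_
  rw [sum_jointSeqProb_filter_fst p fun xn => ε < fdev (margFst p) xn]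
  exact add_le_add (sum_seqProb_fdev_gt_le hq n ε) hhyp

/-- If `ℙ[ f(Yⁿ) > ε' or f(Xⁿ,Yⁿ) > ε' ] ≤ 2^{−n b₁ ε}`, then
`ℙ[ (Xⁿ,Yⁿ) ∉ 𝒜_{ε,ε'}^{(n)}(X,Y) ] ≤ e^{n C_X^{(1)}(ε)} + e^{n C_X^{(2)}(ε)} + 2^{−n b₁ ε}`. -/
theorem prob_not_typical_bound
    {X Y : Type*} [Fintype X] [Fintype Y] (p : X × Y → ℝ)
    (hp : ∀ xy, 0 ≤ p xy) (hsum : ∑ xy, p xy = 1)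
    (n : ℕ) (ε ε' b₁ : ℝ) (hε : 0 < ε) (hε' : 0 < ε') (hb₁ : 0 < b₁)
    (hhyp : ∑ w ∈ Finset.univ.filter (fun w : (Fin n → X) × (Fin n → Y) =>
          fdev (margSnd p) w.2 > ε' ∨ fdev p (pairSeq w) > ε'),
        jointSeqProb p w ≤ (2 : ℝ) ^ (-((n : ℝ) * b₁ * ε))) :
    ∑ w ∈ Finset.univ.filter (fun w : (Fin n → X) × (Fin n → Y) => ¬ typical p ε ε' w),
        jointSeqProb p w
      ≤ Real.exp ((n : ℝ) * chernoff1 (margFst p) ε)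
        + Real.exp ((n : ℝ) * chernoff2 (margFst p) ε)
        + (2 : ℝ) ^ (-((n : ℝ) * b₁ * ε)) :=
  prob_not_typical_bound_general p hp n ε ε' b₁ hhyp
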